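/- arXiv:2102.05155 — 2 statements merged into one kernel-verified Lean document; each statement's English description precedes it below -/
import Mathlib

section
/- Let V ∈ C^{1,1}(ℝ^d), let T > 0, let K ⊂ ℝ^d × ℝ^d be compact and Ω ⊂ ℝ^d open satisfying the geometric condition (GC). Then C[T,K,Ω] := inf_{(x,ξ)∈K} ∫₀^T 1_Ω(X(t;x,ξ)) dt > 0. -/
/-! The set of `(t, z)` with `X(t; z) ∈ Ω` is open in `ℝ × ℝ^{2d}`. By (GC), each `z ∈ K` has a
time `t ∈ (0, T)` and a product neighbourhood `(t - δ, t + δ) × W` of `(t, z)` inside it, so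
every trajectory starting in `W` spends time at least `2δ` in `Ω` during `(0, T)`. Covering the
compact set `K` by finitely many such `W` gives a uniform positive lower bound. -/

open MeasureTheory Complex Real
open scoped ENNReal NNReal InnerProductSpace

noncomputable section

/-- Position space `ℝ^d`. -/
abbrev Rd (d : ℕ) := EuclideanSpace ℝ (Fin d)

/-- The Schrödinger coherent state `|q,p⟩(x) = (πhb)^{-d/4} e^{-|x-q|²/(2hb)} e^{ip·(x-q)/hb}`. -/
def coherent (d : ℕ) (hb : ℝ) (q p : Rd d) (x : Rd d) : ℂ :=
  ((π * hb) ^ (-(d : ℝ) / 4) : ℝ) *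
    Complex.exp ((-‖x - q‖ ^ 2 / (2 * hb) : ℝ) + Complex.I * ((inner ℝ p (x - q) : ℝ)) / (hb : ℝ))

/-- `L²` pairing `⟨φ, ψ⟩ = ∫ conj φ ψ`. -/
def pairing (d : ℕ) (φ ψ : Rd d → ℂ) : ℂ :=
  ∫ x : Rd d, (starRingEnd ℂ) (φ x) * ψ x

/-- Integral of the Husimi function of `ψ` over `K ⊂ ℝ^d × ℝ^d`:
`∫_K |⟨ψ|q,p⟩|² dq dp/(2πhb)^d`, points of `K` being written `z = (q,p)`. -/
def husimiMass (d : ℕ) (hb : ℝ) (ψ : Rd d → ℂ) (K : Set (Rd d × Rd d)) : ℝ :=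
  ∫ z in K, ‖pairing d ψ (coherent d hb z.1 z.2)‖ ^ 2 / (2 * π * hb) ^ d

/-- Variance of the position observable `x_j` in the state `ψ`. -/
def posVar (d : ℕ) (ψ : Rd d → ℂ) (j : Fin d) : ℝ :=
  (∫ x : Rd d, (x j) ^ 2 * ‖ψ x‖ ^ 2) - (∫ x : Rd d, (x j) * ‖ψ x‖ ^ 2) ^ 2

/-- Variance of the momentum observable `-ihb∂_j` in the state `ψ`. -/
def momVar (d : ℕ) (hb : ℝ) (ψ : Rd d → ℂ) (j : Fin d) : ℝ :=
  (∫ x : Rd d, ‖(hb : ℂ) * fderiv ℝ ψ x (EuclideanSpace.single j (1 : ℝ))‖ ^ 2) -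
    (∫ x : Rd d, ((starRingEnd ℂ) (ψ x) *
      (-Complex.I * (hb : ℂ) * fderiv ℝ ψ x (EuclideanSpace.single j (1 : ℝ)))).re) ^ 2

/-- `Δ(ψ)² = Σ_j (Δ_{x_j}(ψ)² + Δ_{-ihb∂_j}(ψ)²)`. -/
def disp2 (d : ℕ) (hb : ℝ) (ψ : Rd d → ℂ) : ℝ :=
  ∑ j : Fin d, (posVar d ψ j + momVar d hb ψ j)

/-- `Δ(ψ)`. -/
def disp (d : ℕ) (hb : ℝ) (ψ : Rd d → ℂ) : ℝ := Real.sqrt (disp2 d hb ψ)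

/-- Laplacian as the sum of the second derivatives along the coordinate directions. -/
def laplacian (d : ℕ) (f : Rd d → ℂ) (x : Rd d) : ℂ :=
  ∑ j : Fin d, fderiv ℝ (fun y => fderiv ℝ f y (EuclideanSpace.single j (1 : ℝ))) x
    (EuclideanSpace.single j (1 : ℝ))

/-- `ψ : ℝ → L²(ℝ^d)` is the solution `t ↦ U(t)*ψ(0)` of the Schrödinger equation
`ihb ∂_t ψ = (-½hb²Δ + V)ψ`: it solves the PDE, stays in `L²` and (the propagator
being unitary) has conserved mass. -/
structure IsSchrodingerSolution (d : ℕ) (hb : ℝ) (V : Rd d → ℝ) (ψ : ℝ → Rd d → ℂ) : Prop where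
  memLp : ∀ t, MemLp (ψ t) 2 (volume : Measure (Rd d))
  mass : ∀ t, ∫ x : Rd d, ‖ψ t x‖ ^ 2 = ∫ x : Rd d, ‖ψ 0 x‖ ^ 2
  pde : ∀ t x, Complex.I * (hb : ℂ) * deriv (fun s => ψ s x) t =
    -((hb : ℂ) ^ 2 / 2) * laplacian d (ψ t) x + (V x : ℂ) * ψ t x

/-- `Φ` is the (globally defined) Hamiltonian flow of `Ẋ = Ξ, Ξ̇ = -∇V(X)`. -/
structure IsHamFlow (d : ℕ) (V' : Rd d → Rd d) (Φ : ℝ → Rd d × Rd d → Rd d × Rd d) : Prop where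
  init : ∀ z, Φ 0 z = z
  ode : ∀ z t, HasDerivAt (fun s => Φ s z) ((Φ t z).2, -V' (Φ t z).1) t

/-- The constant `C[T,K,Ω] := inf_{(x,ξ)∈K} ∫₀^T 1_Ω(X(t;x,ξ)) dt`. -/
def obsConst (d : ℕ) (Φ : ℝ → Rd d × Rd d → Rd d × Rd d) (T : ℝ) (K : Set (Rd d × Rd d))
    (Ω : Set (Rd d)) : ℝ :=
  ⨅ z : K, ∫ t in (0:ℝ)..T, Ω.indicator 1 ((Φ t z.1).1)

/-- `D[T,L] = (e^{(1+L²)T/2} - 1)/(1+L²)`. -/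
def Dconst (T L : ℝ) : ℝ := (Real.exp ((1 + L ^ 2) * T / 2) - 1) / (1 + L ^ 2)

/-- `Ω_δ = {x : dist(x,Ω) < δ}`. -/
def enlarge (d : ℕ) (Ω : Set (Rd d)) (δ : ℝ) : Set (Rd d) :=
  {x | Metric.infDist x Ω < δ}

open Filter Topology Set

theorem IsCompact.exists_gt_forall_le_of_eventually {X α : Type*} [TopologicalSpace X]
    [LinearOrder α] [NoMaxOrder α] {K : Set X} (hK : IsCompact K) {f : X → α} {b : α}
    (h : ∀ z ∈ K, ∃ c > b, ∀ᶠ z' in 𝓝 z, c ≤ f z') :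
    ∃ c > b, ∀ z ∈ K, c ≤ f z := by
  refine hK.induction_on (p := fun s => ∃ c > b, ∀ z ∈ s, c ≤ f z) ?_ ?_ ?_ ?_
  · obtain ⟨c, hc⟩ := exists_gt b
    exact ⟨c, hc, fun _ h => h.elim⟩
  · exact fun s t hst ⟨c, hc, ht⟩ => ⟨c, hc, fun z hz => ht z (hst hz)⟩
  · rintro s t ⟨c, hc, hs⟩ ⟨c', hc', ht⟩
    exact ⟨min c c', lt_min hc hc', fun z hz => hz.elim
      (fun hz => (min_le_left _ _).trans (hs z hz)) (fun hz => (min_le_right _ _).trans (ht z hz))⟩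
  · intro z hz
    obtain ⟨c, hc, hev⟩ := h z hz
    exact ⟨{z' | c ≤ f z'}, mem_nhdsWithin_of_mem_nhds hev, c, hc, fun _ h => h⟩

theorem IsOpen.exists_pos_eventually_le_integral_indicator {X : Type*} [TopologicalSpace X]
    {U : Set (ℝ × X)} (hU : IsOpen U) {a b t : ℝ} {z : X} (ht : t ∈ Ioo a b) (htz : (t, z) ∈ U) :
    ∃ c > 0, ∀ᶠ z' in 𝓝 z, c ≤ ∫ s in a..b, (U.indicator 1 (s, z') : ℝ) := by
  obtain ⟨u, hu, v, hv, huv⟩ := mem_nhds_prod_iff.1 (hU.mem_nhds htz)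
  obtain ⟨l, r, hlr, hlr_sub⟩ :=
    mem_nhds_iff_exists_Ioo_subset.1 (inter_mem hu (Ioo_mem_nhds ht.1 ht.2))
  refine ⟨r - l, sub_pos.2 (hlr.1.trans hlr.2), ?_⟩
  filter_upwards [hv] with z' hz'
  have hslice : MeasurableSet {s : ℝ | (s, z') ∈ U} :=
    (hU.preimage (Continuous.prodMk_left z')).measurableSet
  have hIoo : Ioo l r ⊆ Ioc a b ∩ {s | (s, z') ∈ U} := fun s hs =>
    ⟨Ioo_subset_Ioc_self (hlr_sub hs).2, huv ⟨(hlr_sub hs).1, hz'⟩⟩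
  calc r - l = volume.real (Ioo l r) := by simp [(hlr.1.trans hlr.2).le]
    _ ≤ volume.real (Ioc a b ∩ {s | (s, z') ∈ U}) :=
      measureReal_mono hIoo (measure_inter_lt_top_of_left_ne_top measure_Ioc_lt_top.ne).ne
    _ = ∫ s in a..b, (U.indicator 1 (s, z') : ℝ) := by
      rw [intervalIntegral.integral_of_le (ht.1.trans ht.2).le]
      change _ = ∫ s in Ioc a b, {s | (s, z') ∈ U}.indicator 1 s
      simp only [setIntegral_indicator hslice, Pi.one_apply, setIntegral_const, smul_eq_mul,
        mul_one]

theorem obsConst_pos_general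
    (d : ℕ) (T : ℝ)
    (K : Set (Rd d × Rd d)) (hK : IsCompact K) (hKne : K.Nonempty)
    (Ω : Set (Rd d)) (hΩ : IsOpen Ω)
    (Φ : ℝ → Rd d × Rd d → Rd d × Rd d)
    -- the flow depends continuously on `(t, x, ξ)`
    (hΦcont : Continuous fun p : ℝ × (Rd d × Rd d) => Φ p.1 p.2)
    (hGC : ∀ z ∈ K, ∃ t ∈ Set.Ioo 0 T, (Φ t z).1 ∈ Ω) :
    0 < obsConst d Φ T K Ω := by
  set U : Set (ℝ × (Rd d × Rd d)) := {p | (Φ p.1 p.2).1 ∈ Ω}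
  have hU : IsOpen U := hΩ.preimage (continuous_fst.comp hΦcont)
  obtain ⟨c, hc, hcK⟩ := hK.exists_gt_forall_le_of_eventually fun z hz => by
    obtain ⟨t, ht, htΩ⟩ := hGC z hz
    exact hU.exists_pos_eventually_le_integral_indicator ht htΩ
  have : Nonempty K := hKne.to_subtype
  exact hc.trans_le (le_ciInf fun z => hcK z z.2)

/-- Under the geometric condition (GC), `C[T,K,Ω] = inf_{(x,ξ)∈K} ∫₀^T 1_Ω(X(t;x,ξ)) dt > 0`. -/
theorem obsConst_pos
    (d : ℕ) (V : Rd d → ℝ) (V' : Rd d → Rd d)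
    (hV : ∀ x, HasGradientAt V (V' x) x) (L : ℝ≥0) (hLip : LipschitzWith L V')
    (T : ℝ) (hT : 0 < T)
    (K : Set (Rd d × Rd d)) (hK : IsCompact K) (hKne : K.Nonempty)
    (Ω : Set (Rd d)) (hΩ : IsOpen Ω)
    (Φ : ℝ → Rd d × Rd d → Rd d × Rd d) (hΦ : IsHamFlow d V' Φ)
    -- the flow depends continuously on `(t, x, ξ)`
    (hΦcont : Continuous fun p : ℝ × (Rd d × Rd d) => Φ p.1 p.2)
    (hGC : ∀ z ∈ K, ∃ t ∈ Set.Ioo 0 T, (Φ t z).1 ∈ Ω) :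
    0 < obsConst d Φ T K Ω :=
  obsConst_pos_general d T K hK hKne Ω hΩ Φ hΦcont hGC
end
end

section
/- Let ħ > 0, λ > 0, (x,ξ) ∈ ℝ^d × ℝ^d, and let m be a finite positive Borel measure on ℝ^d × ℝ^d. Then trace_{𝔥}( c_λ(x,ξ,y,ħD_y)^{1/2} OP^T_ħ[(2πħ)^d m] c_λ(x,ξ,y,ħD_y)^{1/2} ) = ∬_{ℝ^d × ℝ^d} ( λ²|x−q|² + |ξ−p|² + ½(λ²+1) d ħ ) m(dp dq), as an equality in [0,+∞]. -/
/-!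
The coherent state `|q,p⟩` is a Gaussian wave packet: `|⟨y|q,p⟩|²` is the normalized Gaussian
density centred at `q` with covariance `(ħ/2)·Id`, and
`(ξ_k - ħD_k)|q,p⟩ = ((ξ_k - p_k) - i(y_k - q_k))|q,p⟩`. The quadratic form of `c_λ` at `|q,p⟩`
is therefore the mean of `λ²|x-y|² + |ξ-p|² + |y-q|²` under that Gaussian. Its first moment
vanishes by symmetry and its second moment `dħ/2` comes from differentiating
`∫ e^{-b|v|²} dv = (π/b)^{d/2}` in `b`, so the form equals `λ²|x-q|² + |ξ-p|² + ½(λ²+1)dħ` for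
every `(q,p)`; integrating against `m` gives the theorem.
-/

open MeasureTheory Complex Real
open scoped ENNReal NNReal InnerProductSpace

noncomputable section

/-- Quadratic form of the quantum transportation cost
`c_λ(x,ξ,y,ħD_y) = λ²|x-y|² + |ξ-ħD_y|²` at `φ`, with values in `[0,∞]`. -/
def costForm (d : ℕ) (hb lam : ℝ) (x ξ : Rd d) (φ : Rd d → ℂ) : ℝ≥0∞ :=
  ∫⁻ y : Rd d,
    ENNReal.ofReal (lam ^ 2 * ‖x - y‖ ^ 2 * ‖φ y‖ ^ 2)
    + ∑ k : Fin d,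
        (‖(ξ k : ℂ) * φ y
          + Complex.I * (hb : ℂ) * fderiv ℝ φ y (EuclideanSpace.single k (1 : ℝ))‖₊
            : ℝ≥0∞) ^ 2

/-- Quadratic form of the harmonic oscillator `-ħ²Δ_y + λ²|y|²` at `φ`. -/
def harmForm (d : ℕ) (hb lam : ℝ) (φ : Rd d → ℂ) : ℝ≥0∞ :=
  ∫⁻ y : Rd d,
    ENNReal.ofReal (lam ^ 2 * ‖y‖ ^ 2 * ‖φ y‖ ^ 2)
    + ∑ k : Fin d,
        (‖(hb : ℂ) * fderiv ℝ φ y (EuclideanSpace.single k (1 : ℝ))‖₊ : ℝ≥0∞) ^ 2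

/-- A coupling `Q ∈ C(f, OP^T_ħ[(2πħ)^d μ])` of a probability density `f` on
`ℝ^d × ℝ^d` and the Töplitz operator `OP^T_ħ[(2πħ)^d μ] = ∬ |q,p⟩⟨q,p| μ(dq dp)`.
The nonnegative trace-class operators `Q(x,ξ)` are encoded through countable
decompositions into rank-one pieces `Q(x,ξ) = Σ_j |g_j(x,ξ)⟩⟨g_j(x,ξ)|`. -/
structure CouplingT (d : ℕ) (hb : ℝ) (f : Rd d × Rd d → ℝ) (μ : Measure (Rd d × Rd d)) where
  g : Rd d × Rd d → ℕ → Rd d → ℂ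
  memLp : ∀ z j, MemLp (g z j) 2 (volume : Measure (Rd d))
  traceEq : ∀ᵐ z : Rd d × Rd d, (∑' j : ℕ, ∫ y : Rd d, ‖g z j y‖ ^ 2) = f z
  weakEq : ∀ φ ψ : Rd d → ℂ, MemLp φ 2 (volume : Measure (Rd d)) →
    MemLp ψ 2 (volume : Measure (Rd d)) →
    (∫ z : Rd d × Rd d, ∑' j : ℕ, pairing d φ (g z j) * pairing d (g z j) ψ)
      = ∫ w : Rd d × Rd d,
          pairing d φ (coherent d hb w.1 w.2) * pairing d (coherent d hb w.1 w.2) ψ ∂μ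

/-- `E_{ħ,λ}(f, OP^T_ħ[(2πħ)^d μ])²`. -/
def EsqT (d : ℕ) (hb lam : ℝ) (f : Rd d × Rd d → ℝ) (μ : Measure (Rd d × Rd d)) : ℝ≥0∞ :=
  ⨅ Q : CouplingT d hb f μ,
    ∫⁻ z : Rd d × Rd d, ∑' j : ℕ, costForm d hb lam z.1 z.2 (Q.g z j)

/-- The squared quadratic Monge–Kantorovich (Wasserstein-2) distance between two Borel
probability measures on `ℝ^d × ℝ^d`. -/
def W2sq (d : ℕ) (μ ν : Measure (Rd d × Rd d)) : ℝ≥0∞ :=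
  ⨅ cpl ∈ {cpl : Measure ((Rd d × Rd d) × (Rd d × Rd d)) | cpl.fst = μ ∧ cpl.snd = ν},
    ∫⁻ w, ENNReal.ofReal (‖w.1.1 - w.2.1‖ ^ 2 + ‖w.1.2 - w.2.2‖ ^ 2) ∂cpl

section GaussianIntegral

open Module

variable {V : Type*} [NormedAddCommGroup V] [InnerProductSpace ℝ V] [FiniteDimensional ℝ V]
  [MeasurableSpace V] [BorelSpace V]

lemma integrable_exp_neg_mul_sq_norm {b : ℝ} (hb : 0 < b) :
    Integrable (fun v : V => rexp (-b * ‖v‖ ^ 2)) := by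
  refine (GaussianFourier.integrable_cexp_neg_mul_sq_norm_add (V := V)
    (b := (b : ℂ)) (by simpa using hb) 0 0).norm.congr (.of_forall fun v => ?_)
  simp [Complex.norm_exp, ← Complex.ofReal_pow]

lemma integrable_sq_norm_mul_exp_neg_mul_sq_norm {b : ℝ} (hb : 0 < b) :
    Integrable (fun v : V => ‖v‖ ^ 2 * rexp (-b * ‖v‖ ^ 2)) := by
  refine ((integrable_exp_neg_mul_sq_norm (V := V) (half_pos hb)).const_mul (2 / b)).mono
    (by fun_prop) (.of_forall fun v => ?_)
  -- `1 + t ≤ e^t` at `t = b‖v‖²/2` trades the factor `‖v‖²` for half of the decay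
  have hpoly : ‖v‖ ^ 2 ≤ 2 / b * rexp (b / 2 * ‖v‖ ^ 2) := by
    have := add_one_le_exp (b / 2 * ‖v‖ ^ 2)
    rw [div_mul_eq_mul_div, le_div_iff₀ hb]
    nlinarith
  rw [norm_of_nonneg (by positivity), norm_of_nonneg (by positivity)]
  calc ‖v‖ ^ 2 * rexp (-b * ‖v‖ ^ 2)
      ≤ 2 / b * rexp (b / 2 * ‖v‖ ^ 2) * rexp (-b * ‖v‖ ^ 2) := by gcongr
    _ = 2 / b * rexp (-(b / 2) * ‖v‖ ^ 2) := by rw [mul_assoc, ← Real.exp_add]; ring_nf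

lemma integrable_inner_mul_exp_neg_mul_sq_norm (a : V) {b : ℝ} (hb : 0 < b) :
    Integrable (fun v : V => ⟪a, v⟫_ℝ * rexp (-b * ‖v‖ ^ 2)) := by
  refine (((integrable_exp_neg_mul_sq_norm hb).add
    (integrable_sq_norm_mul_exp_neg_mul_sq_norm hb)).const_mul ‖a‖).mono
    (by fun_prop) (.of_forall fun v => ?_)
  have hv : ‖v‖ ≤ 1 + ‖v‖ ^ 2 := by nlinarith [sq_nonneg (‖v‖ - 1)]
  calc ‖⟪a, v⟫_ℝ * rexp (-b * ‖v‖ ^ 2)‖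
      = ‖⟪a, v⟫_ℝ‖ * rexp (-b * ‖v‖ ^ 2) := by rw [norm_mul, norm_of_nonneg (exp_pos _).le]
    _ ≤ ‖a‖ * (1 + ‖v‖ ^ 2) * rexp (-b * ‖v‖ ^ 2) := by
        gcongr
        exact (norm_inner_le_norm a v).trans (by gcongr)
    _ = ‖‖a‖ * (rexp (-b * ‖v‖ ^ 2) + ‖v‖ ^ 2 * rexp (-b * ‖v‖ ^ 2))‖ := by
        rw [norm_of_nonneg (by positivity)]; ring

lemma integral_inner_mul_exp_neg_mul_sq_norm (a : V) (b : ℝ) :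
    ∫ v : V, ⟪a, v⟫_ℝ * rexp (-b * ‖v‖ ^ 2) = 0 := by
  have h := integral_neg_eq_self (fun v : V => ⟪a, v⟫_ℝ * rexp (-b * ‖v‖ ^ 2)) volume
  simp only [inner_neg_right, norm_neg, neg_mul, integral_neg] at h
  simp only [neg_mul]
  linarith

lemma integral_sq_norm_mul_exp_neg_mul_sq_norm {b : ℝ} (hb : 0 < b) :
    ∫ v : V, ‖v‖ ^ 2 * rexp (-b * ‖v‖ ^ 2)
      = finrank ℝ V / (2 * b) * (π / b) ^ ((finrank ℝ V : ℝ) / 2) := by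
  set n : ℝ := (finrank ℝ V : ℝ)
  -- differentiate `c ↦ ∫ e^{-c‖v‖²} = (π / c)^{n/2}` at `c = b`
  have hderiv : HasDerivAt (fun c : ℝ => ∫ v : V, rexp (-c * ‖v‖ ^ 2))
      (∫ v : V, -(‖v‖ ^ 2 * rexp (-b * ‖v‖ ^ 2))) b := by
    refine (hasDerivAt_integral_of_dominated_loc_of_deriv_le (Ioi_mem_nhds (half_lt_self hb))
      (F := fun c v => rexp (-c * ‖v‖ ^ 2)) (F' := fun c v => -(‖v‖ ^ 2 * rexp (-c * ‖v‖ ^ 2)))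
      (.of_forall fun c => by fun_prop) (integrable_exp_neg_mul_sq_norm hb) (by fun_prop)
      (.of_forall fun v c (hc : b / 2 < c) => ?_)
      (integrable_sq_norm_mul_exp_neg_mul_sq_norm (half_pos hb))
      (.of_forall fun v c _ => ?_)).2
    · rw [norm_neg, norm_mul, norm_of_nonneg (by positivity), norm_of_nonneg (exp_pos _).le]
      gcongr
    · simpa [mul_comm] using ((hasDerivAt_id c).neg.mul_const (‖v‖ ^ 2)).exp
  have hclosed : HasDerivAt (fun c : ℝ => (π / c) ^ (n / 2))
      (-π / b ^ 2 * (n / 2) * (π / b) ^ (n / 2 - 1)) b := by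
    convert ((hasDerivAt_inv hb.ne').const_mul π).rpow_const (p := n / 2)
      (.inl (by positivity)) using 1
    · ext c; rw [div_eq_mul_inv]
    · rw [div_eq_mul_inv π b]; ring
  have heq : (fun c : ℝ => ∫ v : V, rexp (-c * ‖v‖ ^ 2)) =ᶠ[nhds b]
      fun c => (π / c) ^ (n / 2) := by
    filter_upwards [eventually_gt_nhds hb] with c hc
    exact GaussianFourier.integral_rexp_neg_mul_sq_norm hc
  have h := (hderiv.congr_of_eventuallyEq heq.symm).unique hclosed
  rw [integral_neg] at h
  rw [neg_eq_iff_eq_neg.mp h, rpow_sub_one (by positivity)]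
  field_simp

end GaussianIntegral

section GaussianDensity

open Module

variable {V : Type*} [NormedAddCommGroup V] [InnerProductSpace ℝ V]

def gaussianDensity (hb : ℝ) (v : V) : ℝ :=
  (π * hb) ^ (-(finrank ℝ V : ℝ) / 2) * rexp (-hb⁻¹ * ‖v‖ ^ 2)

lemma quadratic_mul_gaussianDensity_eq (hb α β : ℝ) (a : V) :
    (fun v : V => (α + ⟪a, v⟫_ℝ + β * ‖v‖ ^ 2) * gaussianDensity hb v)
      = fun v => (π * hb) ^ (-(finrank ℝ V : ℝ) / 2) *
          (α * rexp (-hb⁻¹ * ‖v‖ ^ 2) + ⟪a, v⟫_ℝ * rexp (-hb⁻¹ * ‖v‖ ^ 2)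
            + β * (‖v‖ ^ 2 * rexp (-hb⁻¹ * ‖v‖ ^ 2))) := by
  ext v; simp only [gaussianDensity]; ring

lemma gaussianDensity_nonneg {hb : ℝ} (hb_nonneg : 0 ≤ hb) (v : V) : 0 ≤ gaussianDensity hb v := by
  unfold gaussianDensity; positivity

variable [FiniteDimensional ℝ V] [MeasurableSpace V] [BorelSpace V]

lemma integrable_quadratic_mul_gaussianDensity {hb : ℝ} (hb_pos : 0 < hb) (α β : ℝ) (a : V) :
    Integrable (fun v : V => (α + ⟪a, v⟫_ℝ + β * ‖v‖ ^ 2) * gaussianDensity hb v) := by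
  have hb' : 0 < hb⁻¹ := inv_pos.2 hb_pos
  rw [quadratic_mul_gaussianDensity_eq]
  exact ((((integrable_exp_neg_mul_sq_norm hb').const_mul α).add
    (integrable_inner_mul_exp_neg_mul_sq_norm a hb')).add
    ((integrable_sq_norm_mul_exp_neg_mul_sq_norm hb').const_mul β)).const_mul _

lemma integral_quadratic_mul_gaussianDensity {hb : ℝ} (hb_pos : 0 < hb) (α β : ℝ) (a : V) :
    ∫ v : V, (α + ⟪a, v⟫_ℝ + β * ‖v‖ ^ 2) * gaussianDensity hb v
      = α + β * (finrank ℝ V * hb / 2) := by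
  have hb' : 0 < hb⁻¹ := inv_pos.2 hb_pos
  have hconst := (integrable_exp_neg_mul_sq_norm (V := V) hb').const_mul α
  have hlin := integrable_inner_mul_exp_neg_mul_sq_norm a hb'
  rw [quadratic_mul_gaussianDensity_eq, integral_const_mul, integral_add _
      ((integrable_sq_norm_mul_exp_neg_mul_sq_norm hb').const_mul β),
    integral_add hconst hlin, integral_const_mul, integral_const_mul,
    integral_inner_mul_exp_neg_mul_sq_norm, GaussianFourier.integral_rexp_neg_mul_sq_norm hb',
    integral_sq_norm_mul_exp_neg_mul_sq_norm hb', div_inv_eq_mul, neg_div,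
    rpow_neg (by positivity)]
  · field_simp
    ring
  · exact hconst.add hlin

end GaussianDensity

section CoherentState

variable {d : ℕ} {hb : ℝ}

lemma fderiv_coherent_apply (q p y v : Rd d) :
    fderiv ℝ (coherent d hb q p) y v
      = coherent d hb q p y * ((-⟪y - q, v⟫_ℝ + I * ⟪p, v⟫_ℝ) / hb) := by
  have hquad := ofRealCLM.hasFDerivAt.comp y
    ((((hasFDerivAt_id y).sub_const q).norm_sq).const_mul (-(2 * hb)⁻¹))
  have hlin := ofRealCLM.hasFDerivAt.comp y
    ((innerSL ℝ p).hasFDerivAt.comp y ((hasFDerivAt_id y).sub_const q))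
  have h := ((hquad.add ((hlin.const_mul I).mul_const (hb : ℂ)⁻¹)).cexp).const_mul
    (((π * hb) ^ (-(d : ℝ) / 4) : ℝ) : ℂ)
  rw [(h.congr_of_eventuallyEq (.of_forall fun y => ?_)).fderiv]
  · simp [coherent, inner_sub_left]
    ring_nf
  · simp only [coherent, Function.comp_apply, Pi.add_apply, id, ofRealCLM_apply,
      innerSL_apply_apply]
    push_cast
    ring_nf

lemma norm_sq_coherent (hb_nonneg : 0 ≤ hb) (q p y : Rd d) :
    ‖coherent d hb q p y‖ ^ 2 = gaussianDensity hb (y - q) := by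
  have hbase : 0 ≤ π * hb := by positivity
  rw [coherent, gaussianDensity, finrank_euclideanSpace_fin, norm_mul, Complex.norm_real,
    Complex.norm_exp, norm_of_nonneg (rpow_nonneg hbase _), mul_pow, ← rpow_natCast,
    ← rpow_mul hbase, ← Real.exp_nat_mul, Complex.add_re, Complex.ofReal_re,
    Complex.div_ofReal_re, Complex.I_mul_re, Complex.ofReal_im, neg_zero, zero_div, add_zero]
  ring_nf

lemma mul_add_I_mul_fderiv_coherent (hb_ne : hb ≠ 0) (ξ q p y : Rd d) (k : Fin d) :
    (ξ k : ℂ) * coherent d hb q p y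
        + I * hb * fderiv ℝ (coherent d hb q p) y (EuclideanSpace.single k 1)
      = coherent d hb q p y * ((ξ k - p k : ℝ) - I * (y k - q k : ℝ)) := by
  have : (hb : ℂ) ≠ 0 := by exact_mod_cast hb_ne
  simp only [fderiv_coherent_apply, EuclideanSpace.inner_single_right, conj_trivial,
    PiLp.sub_apply, one_mul]
  push_cast
  field_simp
  linear_combination (coherent d hb q p y * p k) * I_sq

lemma costForm_integrand_coherent (hb_pos : 0 < hb) (lam : ℝ) (x ξ q p y : Rd d) :
    ENNReal.ofReal (lam ^ 2 * ‖x - y‖ ^ 2 * ‖coherent d hb q p y‖ ^ 2)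
      + ∑ k : Fin d, (‖(ξ k : ℂ) * coherent d hb q p y
          + I * hb * fderiv ℝ (coherent d hb q p) y (EuclideanSpace.single k 1)‖₊ : ℝ≥0∞) ^ 2
      = ENNReal.ofReal
          ((lam ^ 2 * ‖x - y‖ ^ 2 + ‖ξ - p‖ ^ 2 + ‖y - q‖ ^ 2) * gaussianDensity hb (y - q)) := by
  have hcoord (k : Fin d) : (‖(ξ k : ℂ) * coherent d hb q p y
      + I * hb * fderiv ℝ (coherent d hb q p) y (EuclideanSpace.single k 1)‖₊ : ℝ≥0∞) ^ 2
      = ENNReal.ofReal (‖coherent d hb q p y‖ ^ 2 * ((ξ k - p k) ^ 2 + (y k - q k) ^ 2)) := by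
    rw [mul_add_I_mul_fderiv_coherent hb_pos.ne', ← enorm_eq_nnnorm, ← ofReal_norm,
      ← ENNReal.ofReal_pow (norm_nonneg _), norm_mul, mul_pow]
    congr 2
    rw [Complex.sq_norm, Complex.normSq_apply]
    simp
    ring
  rw [Finset.sum_congr rfl fun k _ => hcoord k, ← ENNReal.ofReal_sum_of_nonneg
      fun k _ => by positivity, ← ENNReal.ofReal_add (by positivity)
      (Finset.sum_nonneg fun k _ => by positivity), ← Finset.mul_sum, Finset.sum_add_distrib,
    ← norm_sq_coherent hb_pos.le]
  congr 1
  simp only [EuclideanSpace.norm_sq_eq, PiLp.sub_apply, norm_eq_abs, sq_abs]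
  ring

lemma costForm_coherent (hb_pos : 0 < hb) (lam : ℝ) (x ξ q p : Rd d) :
    costForm d hb lam x ξ (coherent d hb q p)
      = ENNReal.ofReal (lam ^ 2 * ‖x - q‖ ^ 2 + ‖ξ - p‖ ^ 2 + (lam ^ 2 + 1) * d * hb / 2) := by
  have hexpand (v : Rd d) : lam ^ 2 * ‖x - (v + q)‖ ^ 2 + ‖ξ - p‖ ^ 2 + ‖v‖ ^ 2
      = lam ^ 2 * ‖x - q‖ ^ 2 + ‖ξ - p‖ ^ 2 + ⟪-(2 * lam ^ 2) • (x - q), v⟫_ℝ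
        + (lam ^ 2 + 1) * ‖v‖ ^ 2 := by
    rw [sub_add_eq_sub_sub_swap, norm_sub_sq_real, real_inner_smul_left]
    ring
  calc costForm d hb lam x ξ (coherent d hb q p)
      = ∫⁻ y, ENNReal.ofReal ((lam ^ 2 * ‖x - y‖ ^ 2 + ‖ξ - p‖ ^ 2 + ‖y - q‖ ^ 2)
          * gaussianDensity hb (y - q)) :=
        lintegral_congr fun y => costForm_integrand_coherent hb_pos lam x ξ q p y
    _ = ∫⁻ v, ENNReal.ofReal ((lam ^ 2 * ‖x - (v + q)‖ ^ 2 + ‖ξ - p‖ ^ 2 + ‖v‖ ^ 2)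
          * gaussianDensity hb v) := by
        conv_rhs => rw [← lintegral_sub_right_eq_self _ q]
        simp only [sub_add_cancel]
    _ = ENNReal.ofReal (∫ v, (lam ^ 2 * ‖x - q‖ ^ 2 + ‖ξ - p‖ ^ 2
          + ⟪-(2 * lam ^ 2) • (x - q), v⟫_ℝ + (lam ^ 2 + 1) * ‖v‖ ^ 2) * gaussianDensity hb v) := by
        simp only [hexpand]
        refine (ofReal_integral_eq_lintegral_ofReal
          (integrable_quadratic_mul_gaussianDensity hb_pos _ _ _) (.of_forall fun v => ?_)).symm
        dsimp only
        rw [← hexpand]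
        exact mul_nonneg (by positivity) (gaussianDensity_nonneg hb_pos.le v)
    _ = _ := by
        rw [integral_quadratic_mul_gaussianDensity hb_pos, finrank_euclideanSpace_fin]
        ring_nf

end CoherentState

/- The trace is evaluated on the decomposition `OP^T_ħ[(2πħ)^d m] = ∬ |q,p⟩⟨q,p| m(dq dp)`:
the left-hand side is the `m`-integral of the quadratic form of `c_λ` at the states `|q,p⟩`. -/
theorem trace_cost_toeplitz_general
    (d : ℕ) (hb lam : ℝ) (hb_pos : 0 < hb)
    (x ξ : Rd d)
    (m : Measure (Rd d × Rd d)) :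
    (∫⁻ w : Rd d × Rd d, costForm d hb lam x ξ (coherent d hb w.1 w.2) ∂m)
      = ∫⁻ w : Rd d × Rd d,
          ENNReal.ofReal
            (lam ^ 2 * ‖x - w.1‖ ^ 2 + ‖ξ - w.2‖ ^ 2 + (lam ^ 2 + 1) * d * hb / 2) ∂m :=
  lintegral_congr fun w => costForm_coherent hb_pos lam x ξ w.1 w.2

/-- **Trace of the transportation cost against a Töplitz operator**: for every finite
positive Borel measure `m` on `ℝ^d × ℝ^d`,
`trace(c_λ(x,ξ,y,ħD_y)^{1/2} OP^T_ħ[(2πħ)^d m] c_λ(x,ξ,y,ħD_y)^{1/2})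
  = ∬ (λ²|x-q|² + |ξ-p|² + ½(λ²+1)dħ) m(dp dq)`,
as an equality in `[0,+∞]`.  The left-hand side is computed on the coherent-state
decomposition `OP^T_ħ[(2πħ)^d m] = ∬ |q,p⟩⟨q,p| m(dq dp)`: it is the `m`-integral of the
quadratic form of `c_λ(x,ξ,y,ħD_y)` at the coherent states `|q,p⟩`. -/
theorem trace_cost_toeplitz
    (d : ℕ) (hb lam : ℝ) (hb_pos : 0 < hb) (hlam : 0 < lam)
    (x ξ : Rd d)
    (m : Measure (Rd d × Rd d)) [IsFiniteMeasure m] :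
    (∫⁻ w : Rd d × Rd d, costForm d hb lam x ξ (coherent d hb w.1 w.2) ∂m)
      = ∫⁻ w : Rd d × Rd d,
          ENNReal.ofReal
            (lam ^ 2 * ‖x - w.1‖ ^ 2 + ‖ξ - w.2‖ ^ 2 + (lam ^ 2 + 1) * d * hb / 2) ∂m :=
  trace_cost_toeplitz_general d hb lam hb_pos x ξ m
end
end
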